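/- arXiv:2404.14572 — 3 statements merged into one kernel-verified Lean document; each statement's English description precedes it below -/
import Mathlib

section
/- The monoid of Gelfand–Tsetlin patterns has the integer decomposition property: every integral GT-pattern u at level r ≥ 1 is a sum of r integral GT-patterns at level 1. Specifically, if u is a GT-pattern at level r ≥ 1 and u' is the 0/1-valued GT-pattern at level 1 whose support equals the support of u, then u − u' is a GT-pattern at level r−1. -/
/-- A Gelfand–Tsetlin pattern at level `r` on the `k × m` grid:  an integer array `u`
(indexed by `ℕ × ℕ`, only the values on `{1,…,k} × {1,…,m}` are relevant) with
`u₁₁ ≥ 0`, `u_{k m} ≤ r`, `u_{ij} ≥ u_{(i−1)j}` for `i ≥ 2` and `u_{ij} ≥ u_{i(j−1)}`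
for `j ≥ 2`. -/
def IsGTPattern (k m : ℕ) (r : ℤ) (u : ℕ → ℕ → ℤ) : Prop :=
  0 ≤ u 1 1 ∧ u k m ≤ r ∧
    (∀ i j, 2 ≤ i → i ≤ k → 1 ≤ j → j ≤ m → u (i - 1) j ≤ u i j) ∧
    (∀ i j, 1 ≤ i → i ≤ k → 2 ≤ j → j ≤ m → u i (j - 1) ≤ u i j)

/-- The `0/1`-valued indicator pattern of the support of `u`. -/
def supportPattern (u : ℕ → ℕ → ℤ) : ℕ → ℕ → ℤ :=
  fun i j => if 0 < u i j then 1 else 0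

/-!
Subtracting the indicator of the support lowers every positive entry by one and keeps the
zero entries, so it is a monotone map `ℤ → ℤ` applied entrywise: it preserves the order
conditions of a GT-pattern and lowers the level by one. Iterating it `r` times brings a
pattern at level `r` down to level `0`, where it vanishes, and the `r` support patterns
peeled off along the way are the required patterns at level `1`.
-/

def peelSupport (u : ℕ → ℕ → ℤ) : ℕ → ℕ → ℤ :=
  fun i j => u i j - supportPattern u i j

lemma monotone_supportIndicator : Monotone fun x : ℤ => if 0 < x then (1 : ℤ) else 0 := by
  intro a b hab
  dsimp only
  split_ifs <;> omega

lemma monotone_sub_supportIndicator :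
    Monotone fun x : ℤ => x - if 0 < x then (1 : ℤ) else 0 := by
  intro a b hab
  dsimp only
  split_ifs <;> omega

lemma peelSupport_add_sum_supportPattern (u : ℕ → ℕ → ℤ) (t i j : ℕ) :
    (peelSupport^[t] u) i j + ∑ s ∈ Finset.range t, supportPattern (peelSupport^[s] u) i j =
      u i j := by
  induction t with
  | zero => simp
  | succ t ih =>
    rw [Function.iterate_succ_apply', Finset.sum_range_succ, ← ih, peelSupport]
    ring

namespace IsGTPattern

variable {k m : ℕ} {r : ℤ} {u : ℕ → ℕ → ℤ}

lemma map {s : ℤ} {f : ℤ → ℤ} (hu : IsGTPattern k m r u) (hf : Monotone f)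
    (h₀ : 0 ≤ f (u 1 1)) (hs : f (u k m) ≤ s) :
    IsGTPattern k m s fun i j => f (u i j) := by
  obtain ⟨-, -, hcol, hrow⟩ := hu
  exact ⟨h₀, hs, fun i j hi hik hj hjm => hf (hcol i j hi hik hj hjm),
    fun i j hi hik hj hjm => hf (hrow i j hi hik hj hjm)⟩

lemma le_of_le_left {i i' j : ℕ} (hu : IsGTPattern k m r u) (hi : 1 ≤ i) (hii' : i ≤ i')
    (hi'k : i' ≤ k) (hj : 1 ≤ j) (hjm : j ≤ m) : u i j ≤ u i' j := by
  induction i', hii' using Nat.le_induction with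
  | base => exact le_rfl
  | succ n hin ih => exact (ih (by omega)).trans (hu.2.2.1 (n + 1) j (by omega) hi'k hj hjm)

lemma le_of_le_right {i j j' : ℕ} (hu : IsGTPattern k m r u) (hi : 1 ≤ i) (hik : i ≤ k)
    (hj : 1 ≤ j) (hjj' : j ≤ j') (hj'm : j' ≤ m) : u i j ≤ u i j' := by
  induction j', hjj' using Nat.le_induction with
  | base => exact le_rfl
  | succ n hjn ih => exact (ih (by omega)).trans (hu.2.2.2 i (n + 1) hi hik (by omega) hj'm)

lemma eq_zero_of_level_zero {i j : ℕ} (hu : IsGTPattern k m 0 u) (hi : 1 ≤ i) (hik : i ≤ k)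
    (hj : 1 ≤ j) (hjm : j ≤ m) : u i j = 0 := by
  have h₁₁ : u 1 1 ≤ u i j :=
    (hu.le_of_le_left le_rfl hi hik le_rfl (hj.trans hjm)).trans
      (hu.le_of_le_right hi hik le_rfl hj hjm)
  have hkm : u i j ≤ u k m :=
    (hu.le_of_le_right hi hik hj hjm le_rfl).trans
      (hu.le_of_le_left hi hik le_rfl (hj.trans hjm) le_rfl)
  linarith [hu.1, hu.2.1]

lemma supportPattern (hu : IsGTPattern k m r u) : IsGTPattern k m 1 (supportPattern u) :=
  hu.map monotone_supportIndicator (by split_ifs <;> omega)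
    (by split_ifs <;> omega)

lemma peelSupport (hu : IsGTPattern k m r u) (hr : 1 ≤ r) :
    IsGTPattern k m (r - 1) (peelSupport u) :=
  hu.map monotone_sub_supportIndicator (by have := hu.1; split_ifs <;> omega)
    (by have := hu.2.1; split_ifs <;> omega)

lemma iterate_peelSupport (hu : IsGTPattern k m r u) {t : ℕ} (ht : (t : ℤ) ≤ r) :
    IsGTPattern k m (r - t) (_root_.peelSupport^[t] u) := by
  induction t with
  | zero => simpa using hu
  | succ t ih =>
    rw [Function.iterate_succ_apply', Nat.cast_succ, ← sub_sub]
    exact (ih (by omega)).peelSupport (by omega)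

end IsGTPattern

theorem gtPattern_integer_decomposition_general
    (k m : ℕ) (r : ℤ) (hr : 1 ≤ r)
    (u : ℕ → ℕ → ℤ) (hu : IsGTPattern k m r u) :
    IsGTPattern k m 1 (supportPattern u) ∧
      IsGTPattern k m (r - 1) (fun i j => u i j - supportPattern u i j) ∧
      ∃ w : ℕ → ℕ → ℕ → ℤ,
        (∀ t, t < r.toNat → IsGTPattern k m 1 (w t)) ∧
        (∀ i j, 1 ≤ i → i ≤ k → 1 ≤ j → j ≤ m →
          u i j = ∑ t ∈ Finset.range r.toNat, w t i j) := by
  have hr_toNat : (r.toNat : ℤ) = r := Int.toNat_of_nonneg (by omega)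
  refine ⟨hu.supportPattern, hu.peelSupport hr, fun t => supportPattern (peelSupport^[t] u),
    fun t ht => (hu.iterate_peelSupport (by omega)).supportPattern,
    fun i j hi hik hj hjm => ?_⟩
  have hlevel_zero := hu.iterate_peelSupport hr_toNat.le
  rw [hr_toNat, sub_self] at hlevel_zero
  rw [← peelSupport_add_sum_supportPattern u r.toNat i j,
    hlevel_zero.eq_zero_of_level_zero hi hik hj hjm, zero_add]

/-- The monoid of Gelfand–Tsetlin patterns has the integer
decomposition property: every GT-pattern `u` at level `r ≥ 1` is a sum of `r`
GT-patterns at level `1`.  Specifically, the `0/1`-valued pattern `u'` whose support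
is that of `u` is a GT-pattern at level `1`, and `u − u'` is a GT-pattern at level
`r − 1`. -/
theorem gtPattern_integer_decomposition
    (k m : ℕ) (hk : 1 ≤ k) (hm : 1 ≤ m) (r : ℤ) (hr : 1 ≤ r)
    (u : ℕ → ℕ → ℤ) (hu : IsGTPattern k m r u) :
    IsGTPattern k m 1 (supportPattern u) ∧
      IsGTPattern k m (r - 1) (fun i j => u i j - supportPattern u i j) ∧
      ∃ w : ℕ → ℕ → ℕ → ℤ,
        (∀ t, t < r.toNat → IsGTPattern k m 1 (w t)) ∧
        (∀ i j, 1 ≤ i → i ≤ k → 1 ≤ j → j ≤ m →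
          u i j = ∑ t ∈ Finset.range r.toNat, w t i j) :=
  gtPattern_integer_decomposition_general k m r hr u hu
end

section
/- Let Q be a dimer model on a disc with matching lattice M = {μ ∈ Z^{Q_1} : δ^1 μ is a constant function on Q_2}, and define deg: M → Z by deg(μ) = the constant value of δ^1 μ. Then the sequence Z → Z^{Q_0} → M → Z, with first map the constants, second map δ^0, and third map deg, is exact: ker(δ^0) = constants, ker(deg) ∩ M = image(δ^0), and deg is surjective whenever a perfect matching exists. -/
/-- A finite quiver with faces: arrows `Q₁` with head/tail maps to vertices `Q₀`, and
faces `Q₂`, where `bd f a` records the multiplicity with which the arrow `a` occurs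
in the boundary cycle of the face `f`. -/
structure QuiverWithFaces (Q₀ Q₁ Q₂ : Type) [Fintype Q₀] [Fintype Q₁] [Fintype Q₂]
    [DecidableEq Q₀] where
  hd : Q₁ → Q₀
  tl : Q₁ → Q₀
  bd : Q₂ → Q₁ → ℕ

namespace QuiverWithFaces

variable {Q₀ Q₁ Q₂ : Type} [Fintype Q₀] [Fintype Q₁] [Fintype Q₂] [DecidableEq Q₀]
variable (Q : QuiverWithFaces Q₀ Q₁ Q₂)

/-- The coboundary `δ⁰ : ℤ^{Q₀} → ℤ^{Q₁}`, `δ⁰φ(a) = φ(ha) − φ(ta)`. -/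
def d0 (φ : Q₀ → ℤ) : Q₁ → ℤ := fun a => φ (Q.hd a) - φ (Q.tl a)

/-- The coboundary `δ¹ : ℤ^{Q₁} → ℤ^{Q₂}`, `δ¹θ(f) = Σ_{a ∈ ∂f} θ(a)`. -/
def d1 (θ : Q₁ → ℤ) : Q₂ → ℤ := fun f => ∑ a, (Q.bd f a : ℤ) * θ a

/-- The boundary `∂₁ : ℤ^{Q₁} → ℤ^{Q₀}` of the corresponding chain complex. -/
def b1 (θ : Q₁ → ℤ) : Q₀ → ℤ :=
  fun x => ∑ a, θ a * ((if Q.hd a = x then 1 else 0) - (if Q.tl a = x then 1 else 0))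

/-- The boundary `∂₂ : ℤ^{Q₂} → ℤ^{Q₁}` of the corresponding chain complex. -/
def b2 (ψ : Q₂ → ℤ) : Q₁ → ℤ := fun a => ∑ f, ψ f * (Q.bd f a : ℤ)

/-- Connectivity of the underlying (undirected) graph. -/
def Connected : Prop :=
  ∀ x y : Q₀, Relation.ReflTransGen
    (fun u v => ∃ a, (Q.hd a = u ∧ Q.tl a = v) ∨ (Q.hd a = v ∧ Q.tl a = u)) x y

/-- The matching lattice `𝕄 = {μ ∈ ℤ^{Q₁} : δ¹μ is constant}`. -/
def matchingLattice : Set (Q₁ → ℤ) := {μ | ∃ c : ℤ, ∀ f : Q₂, Q.d1 μ f = c}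

/-- A perfect matching: `μ ∈ 𝕄` with values in `{0, 1}` and `deg μ = 1`. -/
def IsPerfectMatching (μ : Q₁ → ℤ) : Prop :=
  (∀ a, μ a = 0 ∨ μ a = 1) ∧ ∀ f : Q₂, Q.d1 μ f = 1

end QuiverWithFaces

section Aux

open QuiverWithFaces

variable {Q₀ Q₁ Q₂ : Type} [Fintype Q₀] [Fintype Q₁] [Fintype Q₂] [DecidableEq Q₀]
variable (Q : QuiverWithFaces Q₀ Q₁ Q₂)

lemma aux_pairing_b2 (ψ : Q₂ → ℤ) (μ : Q₁ → ℤ) :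
    ∑ a, Q.b2 ψ a * μ a = ∑ f, ψ f * Q.d1 μ f := by
  simp only [QuiverWithFaces.b2, QuiverWithFaces.d1, Finset.sum_mul, Finset.mul_sum]
  rw [Finset.sum_comm]
  exact Finset.sum_congr rfl fun f _ => Finset.sum_congr rfl fun a _ => by ring

lemma aux_b1_add (θ θ' : Q₁ → ℤ) (x : Q₀) :
    Q.b1 (fun a => θ a + θ' a) x = Q.b1 θ x + Q.b1 θ' x := by
  simp [QuiverWithFaces.b1, add_mul, Finset.sum_add_distrib]

lemma aux_b1_sub (θ θ' : Q₁ → ℤ) (x : Q₀) :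
    Q.b1 (fun a => θ a - θ' a) x = Q.b1 θ x - Q.b1 θ' x := by
  simp [QuiverWithFaces.b1, sub_mul, Finset.sum_sub_distrib]

open Classical in
lemma aux_b1_single (a : Q₁) (x : Q₀) :
    Q.b1 (fun a' => if a' = a then 1 else 0) x
      = (if Q.hd a = x then 1 else 0) - (if Q.tl a = x then 1 else 0) := by
  classical
  simp [QuiverWithFaces.b1, ite_mul, Finset.sum_ite_eq']

open Classical in
lemma aux_single_pair (a : Q₁) (μ : Q₁ → ℤ) :
    ∑ a', (if a' = a then (1:ℤ) else 0) * μ a' = μ a := by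
  classical
  simp [ite_mul, Finset.sum_ite_eq']

end Aux

open QuiverWithFaces in
/-- Let `Q` be a dimer model on a disc (combinatorially: a
connected quiver with faces, whose face boundaries are cycles — i.e. `∂₁ ∘ ∂₂ = 0` —
and with vanishing first homology, as holds for a contractible realisation).  With
`𝕄` the matching lattice and `deg : 𝕄 → ℤ` the constant value of `δ¹μ`, the sequence
`ℤ → ℤ^{Q₀} → 𝕄 → ℤ` (constants, `δ⁰`, `deg`) is exact:  `ker δ⁰` is the constants,
`δ⁰` lands in `ker deg ∩ 𝕄` and equals it, and `deg` is surjective whenever a perfect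
matching exists. -/
theorem matchingLattice_sequence_exact
    {Q₀ Q₁ Q₂ : Type} [Fintype Q₀] [Fintype Q₁] [Fintype Q₂] [DecidableEq Q₀]
    (Q : QuiverWithFaces Q₀ Q₁ Q₂)
    (hconn : Q.Connected)
    (hcycle : ∀ (f : Q₂) (x : Q₀),
      ∑ a, (Q.bd f a : ℤ) * ((if Q.hd a = x then 1 else 0) - (if Q.tl a = x then 1 else 0)) = 0)
    (hH1 : ∀ θ : Q₁ → ℤ, Q.b1 θ = 0 → ∃ ψ : Q₂ → ℤ, θ = Q.b2 ψ) :
    (∀ φ : Q₀ → ℤ, Q.d0 φ = 0 ↔ ∃ c : ℤ, ∀ x, φ x = c) ∧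
      (∀ φ : Q₀ → ℤ, ∀ f : Q₂, Q.d1 (Q.d0 φ) f = 0) ∧
      (∀ μ : Q₁ → ℤ, (∀ f : Q₂, Q.d1 μ f = 0) ↔ ∃ φ : Q₀ → ℤ, μ = Q.d0 φ) ∧
      ((∃ μ, Q.IsPerfectMatching μ) →
        ∀ z : ℤ, ∃ μ ∈ Q.matchingLattice, ∀ f : Q₂, Q.d1 μ f = z) := by
  classical
  have hd1d0 : ∀ (φ : Q₀ → ℤ) (f : Q₂), Q.d1 (Q.d0 φ) f = 0 := by
    intro φ f
    have h : ∀ a : Q₁, φ (Q.hd a) - φ (Q.tl a)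
        = ∑ x, φ x * ((if Q.hd a = x then 1 else 0) - (if Q.tl a = x then 1 else 0)) := by
      intro a
      simp [mul_sub, Finset.sum_sub_distrib, mul_ite, Finset.sum_ite_eq]
    simp only [QuiverWithFaces.d1, QuiverWithFaces.d0]
    calc ∑ a, (Q.bd f a : ℤ) * (φ (Q.hd a) - φ (Q.tl a))
        = ∑ a, ∑ x, φ x * ((Q.bd f a : ℤ) *
            ((if Q.hd a = x then 1 else 0) - (if Q.tl a = x then 1 else 0))) := by
          refine Finset.sum_congr rfl fun a _ => ?_
          rw [h a, Finset.mul_sum]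
          exact Finset.sum_congr rfl fun x _ => by ring
      _ = ∑ x, φ x * ∑ a, (Q.bd f a : ℤ) *
            ((if Q.hd a = x then 1 else 0) - (if Q.tl a = x then 1 else 0)) := by
          rw [Finset.sum_comm]
          exact Finset.sum_congr rfl fun x _ => by rw [Finset.mul_sum]
      _ = 0 := by simp [hcycle f]
  refine ⟨?_, hd1d0, ?_, ?_⟩
  · -- ker δ⁰ = constants
    intro φ
    constructor
    · intro h
      have hstep : ∀ a : Q₁, φ (Q.hd a) = φ (Q.tl a) := by
        intro a
        have := congrFun h a
        simpa [QuiverWithFaces.d0, sub_eq_zero] using this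
      by_cases hne : Nonempty Q₀
      · obtain ⟨x₀⟩ := hne
        refine ⟨φ x₀, fun x => ?_⟩
        induction hconn x₀ x with
        | refl => rfl
        | tail _ step ih =>
          obtain ⟨a, hcase⟩ := step
          rcases hcase with ⟨h1, h2⟩ | ⟨h1, h2⟩
          · rw [← h2, ← hstep a, h1, ih]
          · rw [← h1, hstep a, h2, ih]
      · exact ⟨0, fun x => (hne ⟨x⟩).elim⟩
    · rintro ⟨c, hc⟩
      funext a
      simp [QuiverWithFaces.d0, hc]
  · -- ker deg ∩ 𝕄 = image δ⁰
    intro μ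
    constructor
    · intro hμ
      by_cases hne : Nonempty Q₀
      · obtain ⟨x₀⟩ := hne
        set P : Q₀ → ℤ → Prop := fun x v => ∃ θ : Q₁ → ℤ,
          (∀ y, Q.b1 θ y = (if x = y then 1 else 0) - (if x₀ = y then 1 else 0)) ∧
            v = ∑ a, θ a * μ a with hP
        -- existence of potentials
        have hext : ∀ (b c : Q₀) (v : ℤ), P b v →
            (∃ a, (Q.hd a = c ∧ Q.tl a = b) ∨ (Q.hd a = b ∧ Q.tl a = c)) →
            ∃ v', P c v' := by
          intro b c v ⟨θ, hθ, hv⟩ hstep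
          obtain ⟨a, hcase⟩ := hstep
          rcases hcase with ⟨h1, h2⟩ | ⟨h1, h2⟩
          · refine ⟨v + μ a, fun a' => θ a' + (if a' = a then 1 else 0), fun y => ?_, ?_⟩
            · rw [aux_b1_add, aux_b1_single, hθ y, h1, h2]
              split_ifs <;> omega
            · rw [hv]
              simp [add_mul, Finset.sum_add_distrib, ite_mul, Finset.sum_ite_eq']
          · refine ⟨v - μ a, fun a' => θ a' - (if a' = a then 1 else 0), fun y => ?_, ?_⟩
            · rw [aux_b1_sub, aux_b1_single, hθ y, h1, h2]
              split_ifs <;> omega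
            · rw [hv]
              simp [sub_mul, Finset.sum_sub_distrib, ite_mul, Finset.sum_ite_eq']
        have hex : ∀ x, ∃ v, P x v := by
          intro x
          induction hconn x₀ x with
          | refl =>
            refine ⟨0, fun _ => 0, fun y => ?_, by simp⟩
            simp [QuiverWithFaces.b1]
          | tail _ step ih =>
            obtain ⟨v, hv⟩ := ih
            rename_i b c _
            refine hext b c v hv ?_
            obtain ⟨a, hcase⟩ := step
            exact ⟨a, hcase.symm.imp (fun h => ⟨h.1, h.2⟩) (fun h => ⟨h.1, h.2⟩)⟩
        -- uniqueness of potentials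
        have huniq : ∀ x v v', P x v → P x v' → v = v' := by
          rintro x v v' ⟨θ, hθ, hv⟩ ⟨θ', hθ', hv'⟩
          have hb : Q.b1 (fun a => θ a - θ' a) = 0 := by
            funext y
            rw [aux_b1_sub, hθ y, hθ' y, sub_self]
            rfl
          obtain ⟨ψ, hψ⟩ := hH1 _ hb
          have : v - v' = 0 := by
            rw [hv, hv', ← Finset.sum_sub_distrib]
            have : ∀ a, θ a * μ a - θ' a * μ a = Q.b2 ψ a * μ a := by
              intro a
              rw [← sub_mul, ← congrFun hψ a]
            rw [Finset.sum_congr rfl fun a _ => this a, aux_pairing_b2]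
            simp [hμ]
          omega
        choose φ hφ using hex
        refine ⟨φ, funext fun a => ?_⟩
        have h1 : P (Q.tl a) (φ (Q.tl a)) := hφ _
        have h2 : ∃ v', P (Q.hd a) v' := hext (Q.tl a) (Q.hd a) _ h1 ⟨a, Or.inl ⟨rfl, rfl⟩⟩
        obtain ⟨θ, hθ, hv⟩ := h1
        have h3 : P (Q.hd a) (φ (Q.tl a) + μ a) := by
          refine ⟨fun a' => θ a' + (if a' = a then 1 else 0), fun y => ?_, ?_⟩
          · rw [aux_b1_add, aux_b1_single, hθ y]
            split_ifs <;> omega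
          · rw [hv]
            simp [add_mul, Finset.sum_add_distrib, ite_mul, Finset.sum_ite_eq']
        have := huniq _ _ _ (hφ (Q.hd a)) h3
        simp only [QuiverWithFaces.d0]
        omega
      · exact ⟨fun x => (hne ⟨x⟩).elim, funext fun a => ((hne ⟨Q.hd a⟩).elim : _)⟩
    · rintro ⟨φ, rfl⟩
      exact hd1d0 φ
  · -- surjectivity of deg
    rintro ⟨μ, hμ01, hμ1⟩ z
    refine ⟨fun a => z * μ a, ⟨z, fun f => ?_⟩, fun f => ?_⟩ <;>
    · have : Q.d1 (fun a => z * μ a) f = z * Q.d1 μ f := by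
        simp only [QuiverWithFaces.d1, Finset.mul_sum]
        exact Finset.sum_congr rfl fun a _ => by ring
      rw [this, hμ1 f, mul_one]
end

section
/- Let m and m_* be two perfect matchings on a bipartite plabic graph G in the disc (sets of edges covering each internal node exactly once), and let O_* be the perfect orientation determined by m_*. Then the symmetric difference f = (m \ m_*) ∪ (m_* \ m), with each edge oriented according to O_*, is a flow: an edge-disjoint union of directed paths from boundary to boundary using at most one incoming and one outgoing edge at each internal node. Moreover m ↦ f is a bijection between perfect matchings with boundary value I and flows from I to I_* = ∂m_* contained in O_*, with inverse f ↦ (f \ m_*) ∪ (m_* \ f). -/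
/-- A (bipartite) plabic graph in the disc with `n` boundary vertices: internal nodes
`V` coloured black (`true`) / white (`false`), and edges `E`, each edge having a
"black end" `bk e` and a "white end" `wt e`, which is either an internal node of the
corresponding colour or a boundary point (labelled by `Fin n`); no edge joins two
boundary points, and each boundary point lies on exactly one edge. -/
structure PlabicGraph (n : ℕ) (V E : Type) where
  colour : V → Bool
  bk : E → V ⊕ Fin n
  wt : E → V ⊕ Fin n
  bk_black : ∀ e v, bk e = Sum.inl v → colour v = true
  wt_white : ∀ e v, wt e = Sum.inl v → colour v = false
  not_both_boundary : ∀ e, (bk e).isLeft ∨ (wt e).isLeft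
  boundary_unique : ∀ i : Fin n, ∃! e : E, bk e = Sum.inr i ∨ wt e = Sum.inr i

namespace PlabicGraph

variable {n : ℕ} {V E : Type} (G : PlabicGraph n V E)

/-- The edge `e` is incident to the internal node `v`. -/
def Touches (e : E) (v : V) : Prop := G.bk e = Sum.inl v ∨ G.wt e = Sum.inl v

/-- A perfect matching: a set of edges covering each internal node exactly once
(boundary points need not be covered). -/
def IsMatching (m : Set E) : Prop := ∀ v : V, ∃! e : E, e ∈ m ∧ G.Touches e v

/-- The boundary value `∂m` of a matching `m`: the boundary label `i` belongs to `∂m`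
iff the boundary edge at `i` has black internal endpoint and lies in `m`, or has
white internal endpoint and does not lie in `m` (the fixed colour convention). -/
def bval (m : Set E) : Set (Fin n) :=
  {i | ∃ e v, (G.bk e = Sum.inr i ∨ G.wt e = Sum.inr i) ∧ G.Touches e v ∧
    ((G.colour v = true ∧ e ∈ m) ∨ (G.colour v = false ∧ e ∉ m))}

open scoped Classical in
/-- The source of the edge `e` in the perfect orientation `𝒪_*` determined by a
matching `m⋆`: an edge is oriented from its black end to its white end iff it lies
in `m⋆`, and oppositely otherwise. -/
noncomputable def src (mstar : Set E) (e : E) : V ⊕ Fin n :=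
  if e ∈ mstar then G.bk e else G.wt e

open scoped Classical in
/-- The target of the edge `e` in the perfect orientation determined by `m⋆`. -/
noncomputable def tgt (mstar : Set E) (e : E) : V ⊕ Fin n :=
  if e ∈ mstar then G.wt e else G.bk e

/-- A flow in the perfect orientation determined by `m⋆`: a set of edges which,
oriented by `𝒪_*`, uses at most one incoming and at most one outgoing edge at each
internal node, with an incoming edge present iff an outgoing one is (so it is an
edge-disjoint union of directed boundary-to-boundary paths). -/
def IsFlow (mstar f : Set E) : Prop :=
  ∀ v : V,
    ((∃ e ∈ f, G.tgt mstar e = Sum.inl v) ↔ (∃ e ∈ f, G.src mstar e = Sum.inl v)) ∧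
    (∀ e ∈ f, ∀ e' ∈ f, G.tgt mstar e = Sum.inl v → G.tgt mstar e' = Sum.inl v → e = e') ∧
    (∀ e ∈ f, ∀ e' ∈ f, G.src mstar e = Sum.inl v → G.src mstar e' = Sum.inl v → e = e')

/-- The set of boundary labels at which the flow `f` starts. -/
def sources (mstar f : Set E) : Set (Fin n) := {i | ∃ e ∈ f, G.src mstar e = Sum.inr i}

/-- The set of boundary labels at which the flow `f` ends. -/
def sinks (mstar f : Set E) : Set (Fin n) := {i | ∃ e ∈ f, G.tgt mstar e = Sum.inr i}

end PlabicGraph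

namespace PlabicGraph

variable {n : ℕ} {V E : Type} {G : PlabicGraph n V E}

private lemma touch_black' {e : E} {v : V} (h : G.Touches e v) (hc : G.colour v = true) :
    G.bk e = Sum.inl v := by
  rcases h with h | h
  · exact h
  · have h2 := G.wt_white e v h
    rw [h2] at hc; simp at hc

private lemma touch_white' {e : E} {v : V} (h : G.Touches e v) (hc : G.colour v = false) :
    G.wt e = Sum.inl v := by
  rcases h with h | h
  · have h2 := G.bk_black e v h
    rw [h2] at hc; simp at hc
  · exact h

private lemma touch_of_src {mstar : Set E} {e : E} {v : V}
    (h : G.src mstar e = Sum.inl v) : G.Touches e v := by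
  unfold src at h
  by_cases hm : e ∈ mstar
  · simp only [hm, if_true] at h; exact Or.inl h
  · simp only [hm, if_false] at h; exact Or.inr h

private lemma touch_of_tgt {mstar : Set E} {e : E} {v : V}
    (h : G.tgt mstar e = Sum.inl v) : G.Touches e v := by
  unfold tgt at h
  by_cases hm : e ∈ mstar
  · simp only [hm, if_true] at h; exact Or.inr h
  · simp only [hm, if_false] at h; exact Or.inl h

private lemma boundary_of_src {mstar : Set E} {e : E} {i : Fin n}
    (h : G.src mstar e = Sum.inr i) :
    G.bk e = Sum.inr i ∨ G.wt e = Sum.inr i := by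
  unfold src at h
  by_cases hm : e ∈ mstar
  · simp only [hm, if_true] at h; exact Or.inl h
  · simp only [hm, if_false] at h; exact Or.inr h

private lemma boundary_of_tgt {mstar : Set E} {e : E} {i : Fin n}
    (h : G.tgt mstar e = Sum.inr i) :
    G.bk e = Sum.inr i ∨ G.wt e = Sum.inr i := by
  unfold tgt at h
  by_cases hm : e ∈ mstar
  · simp only [hm, if_true] at h; exact Or.inr h
  · simp only [hm, if_false] at h; exact Or.inl h

private lemma src_eq_bk {mstar : Set E} {e : E} (hm : e ∈ mstar) :
    G.src mstar e = G.bk e := by unfold src; simp [hm]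

private lemma src_eq_wt {mstar : Set E} {e : E} (hm : e ∉ mstar) :
    G.src mstar e = G.wt e := by unfold src; simp [hm]

private lemma tgt_eq_wt {mstar : Set E} {e : E} (hm : e ∈ mstar) :
    G.tgt mstar e = G.wt e := by unfold tgt; simp [hm]

private lemma tgt_eq_bk {mstar : Set E} {e : E} (hm : e ∉ mstar) :
    G.tgt mstar e = G.bk e := by unfold tgt; simp [hm]

private lemma src_black {mstar : Set E} {e : E} {v : V} (hc : G.colour v = true) :
    G.src mstar e = Sum.inl v ↔ e ∈ mstar ∧ G.bk e = Sum.inl v := by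
  constructor
  · intro h
    by_cases hm : e ∈ mstar
    · rw [src_eq_bk hm] at h; exact ⟨hm, h⟩
    · rw [src_eq_wt hm] at h
      have h2 := G.wt_white e v h
      rw [h2] at hc; simp at hc
  · rintro ⟨hm, h⟩
    rw [src_eq_bk hm]; exact h

private lemma tgt_black {mstar : Set E} {e : E} {v : V} (hc : G.colour v = true) :
    G.tgt mstar e = Sum.inl v ↔ e ∉ mstar ∧ G.bk e = Sum.inl v := by
  constructor
  · intro h
    by_cases hm : e ∈ mstar
    · rw [tgt_eq_wt hm] at h
      have h2 := G.wt_white e v h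
      rw [h2] at hc; simp at hc
    · rw [tgt_eq_bk hm] at h; exact ⟨hm, h⟩
  · rintro ⟨hm, h⟩
    rw [tgt_eq_bk hm]; exact h

private lemma src_white {mstar : Set E} {e : E} {v : V} (hc : G.colour v = false) :
    G.src mstar e = Sum.inl v ↔ e ∉ mstar ∧ G.wt e = Sum.inl v := by
  constructor
  · intro h
    by_cases hm : e ∈ mstar
    · rw [src_eq_bk hm] at h
      have h2 := G.bk_black e v h
      rw [h2] at hc; simp at hc
    · rw [src_eq_wt hm] at h; exact ⟨hm, h⟩
  · rintro ⟨hm, h⟩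
    rw [src_eq_wt hm]; exact h

private lemma tgt_white {mstar : Set E} {e : E} {v : V} (hc : G.colour v = false) :
    G.tgt mstar e = Sum.inl v ↔ e ∈ mstar ∧ G.wt e = Sum.inl v := by
  constructor
  · intro h
    by_cases hm : e ∈ mstar
    · rw [tgt_eq_wt hm] at h; exact ⟨hm, h⟩
    · rw [tgt_eq_bk hm] at h
      have h2 := G.bk_black e v h
      rw [h2] at hc; simp at hc
  · rintro ⟨hm, h⟩
    rw [tgt_eq_wt hm]; exact h

private lemma flow_of_matching {mstar m : Set E} (hstar : G.IsMatching mstar)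
    (hm : G.IsMatching m) : G.IsFlow mstar (symmDiff m mstar) := by
  intro v
  obtain ⟨em, ⟨hem1, hem2⟩, hum⟩ := hm v
  obtain ⟨es, ⟨hes1, hes2⟩, hus⟩ := hstar v
  have hmem : ∀ e, e ∈ symmDiff m mstar → G.Touches e v → e = em ∨ e = es := by
    intro e he ht
    rw [Set.mem_symmDiff] at he
    rcases he with ⟨h1, -⟩ | ⟨h1, -⟩
    · exact Or.inl (hum e ⟨h1, ht⟩)
    · exact Or.inr (hus e ⟨h1, ht⟩)
  by_cases hcase : em = es
  · have hno : ∀ e, e ∈ symmDiff m mstar → ¬ G.Touches e v := by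
      intro e he ht
      have hmm := hmem e he ht
      rw [Set.mem_symmDiff] at he
      have hb : e ∈ m ∧ e ∈ mstar := by
        rcases hmm with rfl | rfl
        · exact ⟨hem1, by rw [hcase]; exact hes1⟩
        · exact ⟨by rw [← hcase]; exact hem1, hes1⟩
      tauto
    refine ⟨⟨?_, ?_⟩, ?_, ?_⟩
    · rintro ⟨e, he, h⟩; exact absurd (touch_of_tgt h) (hno e he)
    · rintro ⟨e, he, h⟩; exact absurd (touch_of_src h) (hno e he)
    · intro e he e' he' h h'; exact absurd (touch_of_tgt h) (hno e he)
    · intro e he e' he' h h'; exact absurd (touch_of_src h) (hno e he)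
  · have hms : em ∉ mstar := fun h => hcase (hus em ⟨h, hem2⟩)
    have hsm : es ∉ m := fun h => hcase ((hum es ⟨h, hes2⟩).symm)
    have hemf : em ∈ symmDiff m mstar := Set.mem_symmDiff.mpr (Or.inl ⟨hem1, hms⟩)
    have hesf : es ∈ symmDiff m mstar := Set.mem_symmDiff.mpr (Or.inr ⟨hes1, hsm⟩)
    by_cases hc : G.colour v = true
    · have htm : G.tgt mstar em = Sum.inl v :=
        (tgt_black hc).mpr ⟨hms, touch_black' hem2 hc⟩
      have hss : G.src mstar es = Sum.inl v :=
        (src_black hc).mpr ⟨hes1, touch_black' hes2 hc⟩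
      have keyt : ∀ e, e ∈ symmDiff m mstar → G.tgt mstar e = Sum.inl v → e = em := by
        intro e he h
        rcases hmem e he (touch_of_tgt h) with rfl | rfl
        · rfl
        · exact absurd hes1 ((tgt_black hc).mp h).1
      have keys : ∀ e, e ∈ symmDiff m mstar → G.src mstar e = Sum.inl v → e = es := by
        intro e he h
        rcases hmem e he (touch_of_src h) with rfl | rfl
        · exact absurd ((src_black hc).mp h).1 hms
        · rfl
      refine ⟨⟨fun _ => ⟨es, hesf, hss⟩, fun _ => ⟨em, hemf, htm⟩⟩, ?_, ?_⟩
      · intro e he e' he' h h'; rw [keyt e he h, keyt e' he' h']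
      · intro e he e' he' h h'; rw [keys e he h, keys e' he' h']
    · have hc' : G.colour v = false := by simpa using hc
      have hsm' : G.src mstar em = Sum.inl v :=
        (src_white hc').mpr ⟨hms, touch_white' hem2 hc'⟩
      have hts : G.tgt mstar es = Sum.inl v :=
        (tgt_white hc').mpr ⟨hes1, touch_white' hes2 hc'⟩
      have keyt : ∀ e, e ∈ symmDiff m mstar → G.tgt mstar e = Sum.inl v → e = es := by
        intro e he h
        rcases hmem e he (touch_of_tgt h) with rfl | rfl
        · exact absurd ((tgt_white hc').mp h).1 hms
        · rfl
      have keys : ∀ e, e ∈ symmDiff m mstar → G.src mstar e = Sum.inl v → e = em := by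
        intro e he h
        rcases hmem e he (touch_of_src h) with rfl | rfl
        · rfl
        · exact absurd hes1 ((src_white hc').mp h).1
      refine ⟨⟨fun _ => ⟨em, hemf, hsm'⟩, fun _ => ⟨es, hesf, hts⟩⟩, ?_, ?_⟩
      · intro e he e' he' h h'; rw [keyt e he h, keyt e' he' h']
      · intro e he e' he' h h'; rw [keys e he h, keys e' he' h']

private lemma matching_of_flow {mstar f : Set E} (hstar : G.IsMatching mstar)
    (hf : G.IsFlow mstar f) : G.IsMatching (symmDiff f mstar) := by
  intro v
  obtain ⟨es, ⟨hes1, hes2⟩, hus⟩ := hstar v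
  obtain ⟨hiff, htu, hsu⟩ := hf v
  have hkey : ∀ e0, e0 ∈ f → G.Touches e0 v → e0 ∉ mstar → es ∈ f := by
    intro e0 h0 ht0 hn0
    by_cases hc : G.colour v = true
    · have ht : G.tgt mstar e0 = Sum.inl v := (tgt_black hc).mpr ⟨hn0, touch_black' ht0 hc⟩
      obtain ⟨e', he', hs'⟩ := hiff.mp ⟨e0, h0, ht⟩
      obtain ⟨hs1, hs2⟩ := (src_black hc).mp hs'
      have hee : e' = es := hus e' ⟨hs1, Or.inl hs2⟩
      rwa [hee] at he'
    · have hc' : G.colour v = false := by simpa using hc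
      have ht : G.src mstar e0 = Sum.inl v := (src_white hc').mpr ⟨hn0, touch_white' ht0 hc'⟩
      obtain ⟨e', he', ht'⟩ := hiff.mpr ⟨e0, h0, ht⟩
      obtain ⟨hs1, hs2⟩ := (tgt_white hc').mp ht'
      have hee : e' = es := hus e' ⟨hs1, Or.inr hs2⟩
      rwa [hee] at he'
  have huniq : ∀ e e', e ∈ f → G.Touches e v → e ∉ mstar →
      e' ∈ f → G.Touches e' v → e' ∉ mstar → e = e' := by
    intro e e' h1 h2 h3 h1' h2' h3'
    by_cases hc : G.colour v = true
    · exact htu e h1 e' h1' ((tgt_black hc).mpr ⟨h3, touch_black' h2 hc⟩)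
        ((tgt_black hc).mpr ⟨h3', touch_black' h2' hc⟩)
    · have hc' : G.colour v = false := by simpa using hc
      exact hsu e h1 e' h1' ((src_white hc').mpr ⟨h3, touch_white' h2 hc'⟩)
        ((src_white hc').mpr ⟨h3', touch_white' h2' hc'⟩)
  by_cases hex : ∃ e0, e0 ∈ f ∧ G.Touches e0 v ∧ e0 ∉ mstar
  · obtain ⟨e0, h0, ht0, hn0⟩ := hex
    refine ⟨e0, ⟨Set.mem_symmDiff.mpr (Or.inl ⟨h0, hn0⟩), ht0⟩, ?_⟩
    rintro e ⟨he, hte⟩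
    rw [Set.mem_symmDiff] at he
    rcases he with ⟨hef, hen⟩ | ⟨hem, hef⟩
    · exact huniq e e0 hef hte hen h0 ht0 hn0
    · have hees : e = es := hus e ⟨hem, hte⟩
      subst hees
      exact absurd (hkey e0 h0 ht0 hn0) hef
  · push_neg at hex
    have hesnf : es ∉ f := by
      intro hesf
      by_cases hc : G.colour v = true
      · have hs : G.src mstar es = Sum.inl v :=
          (src_black hc).mpr ⟨hes1, touch_black' hes2 hc⟩
        obtain ⟨e', he', ht'⟩ := hiff.mpr ⟨es, hesf, hs⟩
        obtain ⟨hn', hb'⟩ := (tgt_black hc).mp ht'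
        exact hn' (hex e' he' (Or.inl hb'))
      · have hc' : G.colour v = false := by simpa using hc
        have hs : G.tgt mstar es = Sum.inl v :=
          (tgt_white hc').mpr ⟨hes1, touch_white' hes2 hc'⟩
        obtain ⟨e', he', ht'⟩ := hiff.mp ⟨es, hesf, hs⟩
        obtain ⟨hn', hw'⟩ := (src_white hc').mp ht'
        exact hn' (hex e' he' (Or.inr hw'))
    refine ⟨es, ⟨Set.mem_symmDiff.mpr (Or.inr ⟨hes1, hesnf⟩), hes2⟩, ?_⟩
    rintro e ⟨he, hte⟩
    rw [Set.mem_symmDiff] at he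
    rcases he with ⟨hef, hen⟩ | ⟨hem, -⟩
    · exact absurd (hex e hef hte) hen
    · exact hus e ⟨hem, hte⟩

private lemma sources_symmDiff (mstar m : Set E) :
    G.sources mstar (symmDiff m mstar) = G.bval m \ G.bval mstar := by
  ext i
  obtain ⟨e, he, hu⟩ := G.boundary_unique i
  have hsrcmem : ∀ (i' : Fin n),
      i' ∈ G.sources mstar (symmDiff m mstar) ↔
        ∃ e' ∈ symmDiff m mstar, G.src mstar e' = Sum.inr i' := fun _ => Iff.rfl
  rcases he with hb | hw
  · have hwl : (G.wt e).isLeft := by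
      rcases G.not_both_boundary e with h | h
      · rw [hb] at h; simp at h
      · exact h
    obtain ⟨v, hv⟩ := Sum.isLeft_iff.mp hwl
    have hcv : G.colour v = false := G.wt_white e v hv
    have hbval : ∀ s : Set E, i ∈ G.bval s ↔ e ∉ s := by
      intro s
      constructor
      · rintro ⟨e', v', hcond, ht, hor⟩
        have hee : e' = e := hu e' hcond
        subst hee
        have hvv : v' = v := by
          rcases ht with h | h
          · rw [hb] at h; simp at h
          · rw [hv] at h; exact (Sum.inl.inj h).symm
        subst hvv
        rcases hor with ⟨hcol, -⟩ | ⟨-, hns⟩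
        · rw [hcv] at hcol; simp at hcol
        · exact hns
      · intro hns
        exact ⟨e, v, Or.inl hb, Or.inr hv, Or.inr ⟨hcv, hns⟩⟩
    have hsrc : i ∈ G.sources mstar (symmDiff m mstar) ↔
        e ∈ symmDiff m mstar ∧ e ∈ mstar := by
      rw [hsrcmem]
      constructor
      · rintro ⟨e', he', hs⟩
        have hee : e' = e := hu e' (boundary_of_src hs)
        subst hee
        refine ⟨he', ?_⟩
        by_cases hm : e' ∈ mstar
        · exact hm
        · exfalso
          have : G.src mstar e' = G.wt e' := by unfold src; simp [hm]
          rw [this, hv] at hs; simp at hs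
      · rintro ⟨hf, hm⟩
        exact ⟨e, hf, by unfold src; simp [hm, hb]⟩
    rw [Set.mem_diff, hbval m, hbval mstar, hsrc, Set.mem_symmDiff]
    tauto
  · have hbl : (G.bk e).isLeft := by
      rcases G.not_both_boundary e with h | h
      · exact h
      · rw [hw] at h; simp at h
    obtain ⟨v, hv⟩ := Sum.isLeft_iff.mp hbl
    have hcv : G.colour v = true := G.bk_black e v hv
    have hbval : ∀ s : Set E, i ∈ G.bval s ↔ e ∈ s := by
      intro s
      constructor
      · rintro ⟨e', v', hcond, ht, hor⟩
        have hee : e' = e := hu e' hcond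
        subst hee
        have hvv : v' = v := by
          rcases ht with h | h
          · rw [hv] at h; exact (Sum.inl.inj h).symm
          · rw [hw] at h; simp at h
        subst hvv
        rcases hor with ⟨-, hns⟩ | ⟨hcol, -⟩
        · exact hns
        · rw [hcv] at hcol; simp at hcol
      · intro hns
        exact ⟨e, v, Or.inr hw, Or.inl hv, Or.inl ⟨hcv, hns⟩⟩
    have hsrc : i ∈ G.sources mstar (symmDiff m mstar) ↔
        e ∈ symmDiff m mstar ∧ e ∉ mstar := by
      rw [hsrcmem]
      constructor
      · rintro ⟨e', he', hs⟩
        have hee : e' = e := hu e' (boundary_of_src hs)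
        subst hee
        refine ⟨he', ?_⟩
        intro hm
        have : G.src mstar e' = G.bk e' := by unfold src; simp [hm]
        rw [this, hv] at hs; simp at hs
      · rintro ⟨hf, hm⟩
        exact ⟨e, hf, by unfold src; simp [hm, hw]⟩
    rw [Set.mem_diff, hbval m, hbval mstar, hsrc, Set.mem_symmDiff]
    tauto

private lemma sinks_symmDiff (mstar m : Set E) :
    G.sinks mstar (symmDiff m mstar) = G.bval mstar \ G.bval m := by
  ext i
  obtain ⟨e, he, hu⟩ := G.boundary_unique i
  have hsnkmem : ∀ (i' : Fin n),
      i' ∈ G.sinks mstar (symmDiff m mstar) ↔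
        ∃ e' ∈ symmDiff m mstar, G.tgt mstar e' = Sum.inr i' := fun _ => Iff.rfl
  rcases he with hb | hw
  · have hwl : (G.wt e).isLeft := by
      rcases G.not_both_boundary e with h | h
      · rw [hb] at h; simp at h
      · exact h
    obtain ⟨v, hv⟩ := Sum.isLeft_iff.mp hwl
    have hcv : G.colour v = false := G.wt_white e v hv
    have hbval : ∀ s : Set E, i ∈ G.bval s ↔ e ∉ s := by
      intro s
      constructor
      · rintro ⟨e', v', hcond, ht, hor⟩
        have hee : e' = e := hu e' hcond
        subst hee
        have hvv : v' = v := by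
          rcases ht with h | h
          · rw [hb] at h; simp at h
          · rw [hv] at h; exact (Sum.inl.inj h).symm
        subst hvv
        rcases hor with ⟨hcol, -⟩ | ⟨-, hns⟩
        · rw [hcv] at hcol; simp at hcol
        · exact hns
      · intro hns
        exact ⟨e, v, Or.inl hb, Or.inr hv, Or.inr ⟨hcv, hns⟩⟩
    have hsnk : i ∈ G.sinks mstar (symmDiff m mstar) ↔
        e ∈ symmDiff m mstar ∧ e ∉ mstar := by
      rw [hsnkmem]
      constructor
      · rintro ⟨e', he', hs⟩
        have hee : e' = e := hu e' (boundary_of_tgt hs)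
        subst hee
        refine ⟨he', ?_⟩
        intro hm
        have : G.tgt mstar e' = G.wt e' := by unfold tgt; simp [hm]
        rw [this, hv] at hs; simp at hs
      · rintro ⟨hf, hm⟩
        exact ⟨e, hf, by unfold tgt; simp [hm, hb]⟩
    rw [Set.mem_diff, hbval m, hbval mstar, hsnk, Set.mem_symmDiff]
    tauto
  · have hbl : (G.bk e).isLeft := by
      rcases G.not_both_boundary e with h | h
      · exact h
      · rw [hw] at h; simp at h
    obtain ⟨v, hv⟩ := Sum.isLeft_iff.mp hbl
    have hcv : G.colour v = true := G.bk_black e v hv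
    have hbval : ∀ s : Set E, i ∈ G.bval s ↔ e ∈ s := by
      intro s
      constructor
      · rintro ⟨e', v', hcond, ht, hor⟩
        have hee : e' = e := hu e' hcond
        subst hee
        have hvv : v' = v := by
          rcases ht with h | h
          · rw [hv] at h; exact (Sum.inl.inj h).symm
          · rw [hw] at h; simp at h
        subst hvv
        rcases hor with ⟨-, hns⟩ | ⟨hcol, -⟩
        · exact hns
        · rw [hcv] at hcol; simp at hcol
      · intro hns
        exact ⟨e, v, Or.inr hw, Or.inl hv, Or.inl ⟨hcv, hns⟩⟩
    have hsnk : i ∈ G.sinks mstar (symmDiff m mstar) ↔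
        e ∈ symmDiff m mstar ∧ e ∈ mstar := by
      rw [hsnkmem]
      constructor
      · rintro ⟨e', he', hs⟩
        have hee : e' = e := hu e' (boundary_of_tgt hs)
        subst hee
        refine ⟨he', ?_⟩
        by_cases hm : e' ∈ mstar
        · exact hm
        · exfalso
          have : G.tgt mstar e' = G.bk e' := by unfold tgt; simp [hm]
          rw [this, hv] at hs; simp at hs
      · rintro ⟨hf, hm⟩
        exact ⟨e, hf, by unfold tgt; simp [hm, hw]⟩
    rw [Set.mem_diff, hbval m, hbval mstar, hsnk, Set.mem_symmDiff]
    tauto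

private lemma eq_of_diffs {α : Type*} {A B C : Set α}
    (h1 : A \ C = B \ C) (h2 : C \ A = C \ B) : A = B := by
  ext x
  by_cases hx : x ∈ C
  · have h := Set.ext_iff.mp h2 x
    simp only [Set.mem_diff, hx, true_and] at h
    tauto
  · have h := Set.ext_iff.mp h1 x
    simp only [Set.mem_diff, hx, not_false_iff, and_true] at h
    tauto

end PlabicGraph

/-- Let `m⋆` be a perfect matching on a plabic graph `G`, with
perfect orientation `𝒪_*`, and let `I` be a set of boundary labels.  Then
`m ↦ m ∆ m⋆ = (m \ m⋆) ∪ (m⋆ \ m)` is a bijection from perfect matchings with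
boundary value `I` onto flows in `𝒪_*` from `I` to `I⋆ = ∂m⋆` (sources labelled by
`I \ I⋆` and sinks by `I⋆ \ I`), with inverse `f ↦ (f \ m⋆) ∪ (m⋆ \ f)`. -/
theorem PlabicGraph.matching_flow_bijection
    {n : ℕ} {V E : Type} (G : PlabicGraph n V E)
    (mstar : Set E) (hmstar : G.IsMatching mstar) (I : Set (Fin n)) :
    Set.BijOn (fun m => symmDiff m mstar)
        {m : Set E | G.IsMatching m ∧ G.bval m = I}
        {f : Set E | G.IsFlow mstar f ∧ G.sources mstar f = I \ G.bval mstar ∧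
          G.sinks mstar f = G.bval mstar \ I} ∧
      Set.InvOn (fun f => symmDiff f mstar) (fun m => symmDiff m mstar)
        {m : Set E | G.IsMatching m ∧ G.bval m = I}
        {f : Set E | G.IsFlow mstar f ∧ G.sources mstar f = I \ G.bval mstar ∧
          G.sinks mstar f = G.bval mstar \ I} := by
  set S : Set (Set E) := {m : Set E | G.IsMatching m ∧ G.bval m = I} with hS
  set T : Set (Set E) := {f : Set E | G.IsFlow mstar f ∧
      G.sources mstar f = I \ G.bval mstar ∧ G.sinks mstar f = G.bval mstar \ I} with hT
  have hinv : Set.InvOn (fun f => symmDiff f mstar) (fun m => symmDiff m mstar) S T :=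
    ⟨fun m _ => symmDiff_symmDiff_cancel_right mstar m,
     fun f _ => symmDiff_symmDiff_cancel_right mstar f⟩
  have hmt1 : Set.MapsTo (fun m => symmDiff m mstar) S T := by
    rintro m ⟨hm, hI⟩
    refine ⟨flow_of_matching hmstar hm, ?_, ?_⟩
    · rw [sources_symmDiff mstar m, hI]
    · rw [sinks_symmDiff mstar m, hI]
  have hmt2 : Set.MapsTo (fun f => symmDiff f mstar) T S := by
    rintro f ⟨hf, hsrc, hsnk⟩
    refine ⟨matching_of_flow hmstar hf, ?_⟩
    have h1 : symmDiff (symmDiff f mstar) mstar = f := symmDiff_symmDiff_cancel_right mstar f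
    have h2 := sources_symmDiff (G := G) mstar (symmDiff f mstar)
    have h3 := sinks_symmDiff (G := G) mstar (symmDiff f mstar)
    rw [h1, hsrc] at h2
    rw [h1, hsnk] at h3
    exact eq_of_diffs h2.symm h3.symm
  exact ⟨hinv.bijOn hmt1 hmt2, hinv⟩
end
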